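/- arXiv:2605.17051 — 2 statements merged into one kernel-verified Lean document; each statement's English description precedes it below -/
import Mathlib

section
/- Let σ be a finite request sequence and let P be a phase of OPT* that is not the first phase, with pivot x and first request σ_i. Then x ∈ σ_i. -/
/-- Cost of serving request `r` when node `c` is at the center of the star. -/
def serveCost {V : Type*} [DecidableEq V] (c : V) (r : V × V) : ℕ :=
  if c = r.1 ∨ c = r.2 then 1 else 2

/-- Total cost of the schedule `cs` on request sequence `σ`, starting from
initial center `c₀`. -/
def schedCost {V : Type*} [DecidableEq V] (c₀ : V) : List (V × V) → List V → ℕ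
  | [], _ => 0
  | _ :: _, [] => 0
  | r :: σ, c :: cs => (if c = c₀ then 0 else 1) + serveCost c r + schedCost c σ cs

/-- Minimum cost over all (offline) schedules for `σ` starting with center `c₀`. -/
noncomputable def OPT {V : Type*} [DecidableEq V] (c₀ : V) (σ : List (V × V)) : ℕ :=
  sInf {k | ∃ cs : List V, cs.length = σ.length ∧ schedCost c₀ σ cs = k}

/-- The sequence of phase lengths of a schedule: the lengths of the maximal
runs of consecutive requests served with the same center. -/
def phaseLens {V : Type*} [DecidableEq V] (cs : List V) : List ℕ :=
  (cs.splitBy (· == ·)).map List.length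

/-- `IsOptStar c₀ σ cs` : `cs` is a minimum-cost schedule for `σ` (from
initial center `c₀`) that, among all minimum-cost schedules, minimizes the
lexicographic order on the reversed sequence of its phase lengths
(last phase length compared first). -/
def IsOptStar {V : Type*} [DecidableEq V] (c₀ : V) (σ : List (V × V))
    (cs : List V) : Prop :=
  cs.length = σ.length ∧ schedCost c₀ σ cs = OPT c₀ σ ∧
    ∀ cs' : List V, cs'.length = σ.length → schedCost c₀ σ cs' = OPT c₀ σ →
      (phaseLens cs).reverse ≤ (phaseLens cs').reverse

/-!
Suppose the phase starting at request `i` has pivot `b ∉ σᵢ` and follows a phase with pivot `a`.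
Keeping `a` for request `i` saves the migration there and serves `σᵢ` no worse; the only possible
extra cost is a migration `a → b` at request `i + 1`, needed only if the center there is `b`
again. In that case the modified schedule is still optimal, and it moves one request from the
phase of `b` to the phase before it; this makes the reversed phase-length sequence
lexicographically smaller, contradicting the choice of OPT*. Otherwise it is strictly cheaper.
-/

theorem List.splitBy_cons_cons_of_rel {α : Type*} {r : α → α → Bool} {x y : α}
    (h : r x y = true) {l g : List α} {gs : List (List α)}
    (hl : (y :: l).splitBy r = g :: gs) :
    (x :: y :: l).splitBy r = (x :: g) :: gs := by
  obtain ⟨hflat, hnil, hchain, hbound⟩ := List.splitBy_eq_iff.1 hl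
  have hg : g ≠ [] := fun hg => hnil (hg ▸ List.mem_cons_self)
  have hhead : g.head? = some y := by
    obtain ⟨z, g', rfl⟩ := List.exists_cons_of_ne_nil hg
    simp_all
  refine List.splitBy_eq_iff.2 ⟨by simp [hflat], ?_, ?_, ?_⟩
  · simpa using fun h => hnil (List.mem_cons_of_mem g h)
  · simp only [List.mem_cons, forall_eq_or_imp] at hchain ⊢
    refine ⟨List.isChain_cons.2 ⟨by simpa [hhead] using h, hchain.1⟩, hchain.2⟩
  · rw [List.isChain_cons] at hbound ⊢
    refine ⟨fun b hb => ?_, hbound.2⟩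
    obtain ⟨_, hb', hr⟩ := hbound.1 b hb
    exact ⟨List.cons_ne_nil _ _, hb', by rwa [List.getLast_cons hg]⟩

theorem List.exists_eq_append_cons_cons {α : Type*} {l : List α} {i : ℕ} {d x y : α}
    (hi : i + 1 < l.length) (hx : l.getD i d = x) (hy : l.getD (i + 1) d = y) :
    ∃ A B, l = A ++ x :: y :: B ∧ A.length = i := by
  refine ⟨l.take i, l.drop (i + 2), ?_, by simp; omega⟩
  rw [List.getD_eq_getElem _ _ (by omega)] at hx
  rw [List.getD_eq_getElem _ _ hi] at hy
  conv_lhs => rw [← List.take_append_drop i l, List.drop_eq_getElem_cons (by omega),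
    List.drop_eq_getElem_cons hi, hx, hy]

section Phases

variable {V : Type*} [DecidableEq V]

theorem phaseLens_append_cons {l m : List V} {b : V} (hl : ∀ x ∈ l.getLast?, x ≠ b) :
    phaseLens (l ++ b :: m) = phaseLens l ++ phaseLens (b :: m) := by
  rw [phaseLens, List.splitBy_append_cons m (by simpa using hl)]
  simp [phaseLens]

theorem exists_phaseLens_cons_cons_self (b : V) (l : List V) :
    ∃ k rest, phaseLens (b :: l) = k :: rest ∧ phaseLens (b :: b :: l) = (k + 1) :: rest := by
  obtain ⟨g, gs, hl⟩ := List.exists_cons_of_ne_nil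
    (List.splitBy_ne_nil.2 (List.cons_ne_nil b l) : (b :: l).splitBy (· == ·) ≠ [])
  refine ⟨g.length, gs.map List.length, by simp [phaseLens, hl], ?_⟩
  simp [phaseLens, List.splitBy_cons_cons_of_rel (beq_self_eq_true b) hl]

theorem reverse_phaseLens_append_lt {P Q l : List V} {b : V}
    (hP : ∀ x ∈ P.getLast?, x ≠ b) (hQ : ∀ x ∈ Q.getLast?, x ≠ b) :
    (phaseLens (Q ++ b :: l)).reverse < (phaseLens (P ++ b :: b :: l)).reverse := by
  obtain ⟨k, rest, h₁, h₂⟩ := exists_phaseLens_cons_cons_self b l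
  rw [phaseLens_append_cons hQ, phaseLens_append_cons hP, h₁, h₂]
  simpa using List.append_left_lt (l₁ := rest.reverse)
    (List.cons_lt_cons_iff.2 (Or.inl (Nat.lt_succ_self k)) :
      k :: (phaseLens Q).reverse < (k + 1) :: (phaseLens P).reverse)

end Phases

section Cost

variable {V : Type*} [DecidableEq V]

theorem serveCost_le_two (c : V) (r : V × V) : serveCost c r ≤ 2 := by
  unfold serveCost; split <;> omega

theorem schedCost_append {σ₁ : List (V × V)} {cs₁ : List V} (h : cs₁.length = σ₁.length)
    (c₀ : V) (σ₂ : List (V × V)) (cs₂ : List V) :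
    schedCost c₀ (σ₁ ++ σ₂) (cs₁ ++ cs₂) =
      schedCost c₀ σ₁ cs₁ + schedCost (cs₁.getLastD c₀) σ₂ cs₂ := by
  induction σ₁ generalizing cs₁ c₀ with
  | nil => simp [List.eq_nil_of_length_eq_zero h, schedCost]
  | cons r σ₁ ih =>
    obtain _ | ⟨c, cs₁⟩ := cs₁
    · simp at h
    · simp only [List.cons_append, schedCost, ih (Nat.succ_injective h), List.getLastD_cons]
      omega

theorem schedCost_append_cons {σ₁ : List (V × V)} {cs₁ : List V} (h : cs₁.length = σ₁.length)
    (c₀ : V) (r : V × V) (σ₂ : List (V × V)) (c : V) (cs₂ : List V) :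
    schedCost c₀ (σ₁ ++ r :: σ₂) (cs₁ ++ c :: cs₂) =
      schedCost c₀ (σ₁ ++ [r]) (cs₁ ++ [c]) + schedCost c σ₂ cs₂ := by
  have h' : (cs₁ ++ [c]).length = (σ₁ ++ [r]).length := by simp [h]
  simpa using schedCost_append h' c₀ σ₂ cs₂

theorem OPT_le_schedCost (c₀ : V) (σ : List (V × V)) {cs : List V} (h : cs.length = σ.length) :
    OPT c₀ σ ≤ schedCost c₀ σ cs :=
  Nat.sInf_le ⟨cs, h, rfl⟩

theorem schedCost_stay_lt_migrate {a b : V} {r : V × V} (hab : a ≠ b) (hb : serveCost b r = 2)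
    (T : List (V × V)) {D : List V} (hD : D.head? ≠ some b) :
    schedCost a (r :: T) (a :: D) < schedCost a (r :: T) (b :: D) := by
  have := serveCost_le_two a r
  obtain _ | ⟨t, T⟩ := T <;> obtain _ | ⟨d, D⟩ := D <;>
    simp only [schedCost, ↓reduceIte, if_neg hab.symm, hb] <;> try omega
  simp only [List.head?_cons, ne_eq, Option.some.injEq] at hD
  simp only [if_neg hD]
  split_ifs <;> omega

theorem schedCost_stay_le_migrate {a b : V} {r : V × V} (hab : a ≠ b) (hb : serveCost b r = 2)
    (T : List (V × V)) (D : List V) :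
    schedCost a (r :: T) (a :: b :: D) ≤ schedCost a (r :: T) (b :: b :: D) := by
  have := serveCost_le_two a r
  obtain _ | ⟨t, T⟩ := T <;> simp only [schedCost, ↓reduceIte, if_neg hab.symm, hb] <;> omega

end Cost

theorem optStar_phase_starts_with_pivot_general
    {V : Type*} [DecidableEq V]
    (c₀ : V) (σ : List (V × V))
    (cs : List V) (hstar : IsOptStar c₀ σ cs)
    (i : ℕ) (hilen : i < σ.length)
    (hphase : cs.getD i c₀ ≠ cs.getD (i - 1) c₀) :
    cs.getD i c₀ = (σ.getD i (c₀, c₀)).1 ∨ cs.getD i c₀ = (σ.getD i (c₀, c₀)).2 := by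
  obtain ⟨hlen, hcost, hlex⟩ := hstar
  obtain _ | j := i
  · exact absurd rfl hphase
  rw [Nat.add_sub_cancel] at hphase
  generalize ha : cs.getD j c₀ = a at hphase
  generalize hb : cs.getD (j + 1) c₀ = b at hphase ⊢
  generalize hq : σ.getD j (c₀, c₀) = q
  generalize hr : σ.getD (j + 1) (c₀, c₀) = r
  obtain ⟨A, D, rfl, hA⟩ := List.exists_eq_append_cons_cons (hlen ▸ hilen) ha hb
  obtain ⟨S, T, rfl, hS⟩ := List.exists_eq_append_cons_cons hilen hq hr
  by_contra hmem
  have hab : a ≠ b := Ne.symm hphase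
  have hserve : serveCost b r = 2 := if_neg hmem
  have hsplit := schedCost_append_cons (hA.trans hS.symm) c₀ q (r :: T) a
  have hlen' : (A ++ a :: a :: D).length = (S ++ q :: r :: T).length := by simpa using hlen
  have hsuffix := OPT_le_schedCost c₀ _ hlen'
  rw [← hcost, hsplit, hsplit, Nat.add_le_add_iff_left] at hsuffix
  have hD : D.head? = some b := by
    by_contra hD
    exact (schedCost_stay_lt_migrate hab hserve T hD).not_ge hsuffix
  obtain ⟨D, rfl⟩ := List.head?_eq_some_iff.1 hD
  have hcost' : schedCost c₀ (S ++ q :: r :: T) (A ++ a :: a :: b :: D) =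
      OPT c₀ (S ++ q :: r :: T) := by
    have := schedCost_stay_le_migrate hab hserve T D
    rw [← hcost, hsplit, hsplit]
    omega
  refine not_le.2 ?_ (hlex _ hlen' hcost')
  simpa using reverse_phaseLens_append_lt (P := A ++ [a]) (Q := A ++ [a, a]) (l := D)
    (by simpa using hab) (by simpa using hab)

/-- Let `σ` be a finite request sequence (of unordered pairs
of distinct nodes) and let `P` be a phase of `OPT*` that is not the first
phase, i.e. a phase whose first request has index `i ≥ 1` (so the center
changes at `i`: `cs i ≠ cs (i-1)`), with pivot `x = cs i`.
Then `x ∈ σᵢ`. -/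
theorem optStar_phase_starts_with_pivot
    {V : Type*} [DecidableEq V] [Fintype V] (hn : 3 ≤ Fintype.card V)
    (c₀ : V) (σ : List (V × V)) (hσ : ∀ r ∈ σ, r.1 ≠ r.2)
    (cs : List V) (hstar : IsOptStar c₀ σ cs)
    (i : ℕ) (hi1 : 1 ≤ i) (hilen : i < σ.length)
    (hphase : cs.getD i c₀ ≠ cs.getD (i - 1) c₀) :
    cs.getD i c₀ = (σ.getD i (c₀, c₀)).1 ∨ cs.getD i c₀ = (σ.getD i (c₀, c₀)).2 :=
  optStar_phase_starts_with_pivot_general c₀ σ cs hstar i hilen hphase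
end

section
/- At every point during the execution of PivotTracking (after serving each request), the current center belongs to the candidate set C. Consequently, PivotTracking pays exactly 2 on every request on which it applies its union behavior. -/
/-- One step of the deterministic algorithm PivotTracking (state = (center,
candidate set)); tie-breaking in the intersection behavior by the fixed rule `tb`. -/
def ptStep {V : Type*} [DecidableEq V] (tb : V → V → V) (st : V × Finset V)
    (r : V × V) : V × Finset V :=
  if (st.2 ∩ {r.1, r.2}).Nonempty then
    let C' := st.2 ∩ {r.1, r.2}
    (if st.1 ∈ C' then st.1
     else if C' = {r.1, r.2} then tb r.1 r.2
     else if r.1 ∈ C' then r.1 else r.2, C')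
  else (st.1, st.2 ∪ {r.1, r.2})

/-- The sequence of states of PivotTracking: `(ptStates tb c₀ σ).get i` is the
state (center, candidate set) just before the `i`-th request is served. -/
def ptStates {V : Type*} [DecidableEq V] (tb : V → V → V) (c₀ : V)
    (σ : List (V × V)) : List (V × Finset V) :=
  σ.scanl (ptStep tb) (c₀, {c₀})

/-- The cost (migration plus serving) PivotTracking pays on the `i`-th
request of `σ` (0-based). -/
def ptPay {V : Type*} [DecidableEq V] (tb : V → V → V) (c₀ : V)
    (σ : List (V × V)) (i : ℕ) : ℕ :=
  (if ((ptStates tb c₀ σ).getD (i + 1) (c₀, {c₀})).1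
      = ((ptStates tb c₀ σ).getD i (c₀, {c₀})).1 then 0 else 1)
    + serveCost ((ptStates tb c₀ σ).getD (i + 1) (c₀, {c₀})).1 (σ.getD i (c₀, c₀))

/-! An intersection step puts the center into the new candidate set by construction, and a
union step only enlarges `C` without moving the center, so `center ∈ C` is invariant. On a
union step `C` is disjoint from the request, hence so is the unmoved center: no migration is
paid and serving costs `2`. -/

section PivotTracking

variable {V : Type*} [DecidableEq V] (tb : V → V → V)

lemma ptStep_center_mem (htb : ∀ u v : V, tb u v = u ∨ tb u v = v) {st : V × Finset V}
    (h : st.1 ∈ st.2) (r : V × V) : (ptStep tb st r).1 ∈ (ptStep tb st r).2 := by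
  unfold ptStep
  split_ifs with hne
  · dsimp only
    split_ifs with hc hall h₁
    · exact hc
    · rw [hall]
      rcases htb r.1 r.2 with h' | h' <;> simp [h']
    · exact h₁
    · obtain ⟨x, hx⟩ := hne
      obtain rfl | rfl : x = r.1 ∨ x = r.2 := by simpa using (Finset.mem_inter.1 hx).2
      · exact absurd hx h₁
      · exact hx
  · exact Finset.mem_union_left _ h

lemma ptStep_of_not_nonempty {st : V × Finset V} {r : V × V}
    (h : ¬ (st.2 ∩ {r.1, r.2}).Nonempty) : ptStep tb st r = (st.1, st.2 ∪ {r.1, r.2}) :=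
  if_neg h

lemma serveCost_eq_two {c : V} {r : V × V} (h : c ∉ ({r.1, r.2} : Finset V)) :
    serveCost c r = 2 :=
  if_neg (by simpa using h)

lemma ptStates_getD_zero (c₀ : V) (σ : List (V × V)) :
    (ptStates tb c₀ σ).getD 0 (c₀, {c₀}) = (c₀, {c₀}) := by
  simp [ptStates]

lemma ptStates_getD_succ (c₀ : V) {σ : List (V × V)} {i : ℕ} (hi : i < σ.length) :
    (ptStates tb c₀ σ).getD (i + 1) (c₀, {c₀})
      = ptStep tb ((ptStates tb c₀ σ).getD i (c₀, {c₀})) (σ.getD i (c₀, c₀)) := by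
  have hlen : (ptStates tb c₀ σ).length = σ.length + 1 := List.length_scanl
  rw [List.getD_eq_getElem _ _ (by omega), List.getD_eq_getElem _ _ (by omega),
    List.getD_eq_getElem _ _ hi]
  exact List.getElem_succ_scanl _

lemma ptStates_center_mem (htb : ∀ u v : V, tb u v = u ∨ tb u v = v) (c₀ : V)
    (σ : List (V × V)) : ∀ i ≤ σ.length,
      ((ptStates tb c₀ σ).getD i (c₀, {c₀})).1 ∈ ((ptStates tb c₀ σ).getD i (c₀, {c₀})).2
  | 0, _ => by
    rw [ptStates_getD_zero]
    exact Finset.mem_singleton_self c₀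
  | i + 1, hi => by
    rw [ptStates_getD_succ tb c₀ hi]
    exact ptStep_center_mem tb htb (ptStates_center_mem htb c₀ σ i (by omega)) _

end PivotTracking

theorem pivotTracking_center_mem_candidates_and_union_pays_two_general
    {V : Type*} [DecidableEq V]
    (c₀ : V) (σ : List (V × V))
    (tb : V → V → V) (htb : ∀ u v : V, tb u v = u ∨ tb u v = v) :
    (∀ i ≤ σ.length,
      ((ptStates tb c₀ σ).getD i (c₀, {c₀})).1
        ∈ ((ptStates tb c₀ σ).getD i (c₀, {c₀})).2) ∧
    (∀ i < σ.length,
      ¬ (((ptStates tb c₀ σ).getD i (c₀, {c₀})).2 ∩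
          {(σ.getD i (c₀, c₀)).1, (σ.getD i (c₀, c₀)).2}).Nonempty →
        ptPay tb c₀ σ i = 2) := by
  refine ⟨ptStates_center_mem tb htb c₀ σ, fun i hi hunion => ?_⟩
  have hcenter := ptStates_center_mem tb htb c₀ σ i hi.le
  have hout : ((ptStates tb c₀ σ).getD i (c₀, {c₀})).1 ∉
      ({(σ.getD i (c₀, c₀)).1, (σ.getD i (c₀, c₀)).2} : Finset V) :=
    fun hmem => hunion ⟨_, Finset.mem_inter.2 ⟨hcenter, hmem⟩⟩
  rw [ptPay, ptStates_getD_succ tb c₀ hi, ptStep_of_not_nonempty tb hunion, if_pos rfl,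
    serveCost_eq_two hout]

/-- At every point during the execution of PivotTracking
(after serving each request), the current center belongs to the candidate set
`C`.  Consequently, PivotTracking pays exactly `2` on every request on which
it applies its union behavior. -/
theorem pivotTracking_center_mem_candidates_and_union_pays_two
    {V : Type*} [DecidableEq V] [Fintype V] (hn : 3 ≤ Fintype.card V)
    (c₀ : V) (σ : List (V × V)) (hσ : ∀ r ∈ σ, r.1 ≠ r.2)
    (tb : V → V → V) (htb : ∀ u v : V, tb u v = u ∨ tb u v = v) :
    (∀ i ≤ σ.length,
      ((ptStates tb c₀ σ).getD i (c₀, {c₀})).1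
        ∈ ((ptStates tb c₀ σ).getD i (c₀, {c₀})).2) ∧
    (∀ i < σ.length,
      ¬ (((ptStates tb c₀ σ).getD i (c₀, {c₀})).2 ∩
          {(σ.getD i (c₀, c₀)).1, (σ.getD i (c₀, c₀)).2}).Nonempty →
        ptPay tb c₀ σ i = 2) :=
  pivotTracking_center_mem_candidates_and_union_pays_two_general c₀ σ tb htb
end
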